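/- arXiv:2111.11482 — 4 statements merged into one kernel-verified Lean document; each statement's English description precedes it below -/
import Mathlib

section
/- There exist two distinct finite weighted multisets of positive reals whose weighted ReLU sums agree under every linear map: for every real w, 1·ReLU(w·2) − 1·ReLU(w·1) + (1/4)·ReLU(w·4) = 1·ReLU(w·6) − 1·ReLU(w·4), even though the multisets {2, 1, 4} and {6, 4} are not equal (as multisets of reals). -/
/-!
ReLU is positively homogeneous, so a weighted ReLU sum over positive points collapses to
`(∑ aᵢ xᵢ) • ReLU w`: only the first moment `∑ aᵢ xᵢ` of the weighted multiset is seen, and it is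
`2 - 1 + 4/4 = 6 - 4 = 2` on both sides.
-/

/-- ReLU on the reals. -/
noncomputable def ReLU (t : ℝ) : ℝ := max t 0

theorem ReLU_mul_of_nonneg {c : ℝ} (hc : 0 ≤ c) (w : ℝ) : ReLU (w * c) = c * ReLU w := by
  rw [ReLU, ReLU, mul_comm c, max_mul_of_nonneg _ _ hc, zero_mul]

/-- There exist two distinct weighted multisets of positive reals, namely
`{2, 1, 4}` with weights `1, -1, 1/4` and `{6, 4}` with weights `1, -1`,
whose weighted ReLU sums agree under every linear map `t ↦ w * t`. -/
theorem stmt0 :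
    (∀ w : ℝ,
      1 * ReLU (w * 2) - 1 * ReLU (w * 1) + (1 / 4) * ReLU (w * 4)
        = 1 * ReLU (w * 6) - 1 * ReLU (w * 4)) ∧
    ({2, 1, 4} : Multiset ℝ) ≠ ({6, 4} : Multiset ℝ) := by
  refine ⟨fun w => ?_, fun h => ?_⟩
  · rw [ReLU_mul_of_nonneg zero_le_two, ReLU_mul_of_nonneg zero_le_one,
      ReLU_mul_of_nonneg zero_le_four, ReLU_mul_of_nonneg (by norm_num : (0 : ℝ) ≤ 6)]
    ring
  · simpa using congrArg Multiset.card h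
end

section
/- Let E be a real inner product space and let w ∈ E. Then the map from E to E sending z to exp(max(⟨w, z⟩, 0)) • z is injective. In particular, for distinct vectors z₁ ≠ z₂ in E, the attention-weighted vectors exp(ReLU(⟨w, z₁⟩)) • z₁ and exp(ReLU(⟨w, z₂⟩)) • z₂ are distinct. -/
open scoped RealInnerProductSpace

/-!
Applying the functional `⟪w, ·⟫` to `exp (max ⟪w, z⟫ 0) • z` gives `g ⟪w, z⟫` with
`g t = exp (max t 0) * t`, and `g` is strictly increasing. So equal images force equal values of
`⟪w, z⟫`, hence equal (nonzero) scalars, which cancel.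
-/

open Real

theorem LinearMap.injective_smul_of_injective_mul {𝕜 E : Type*} [Field 𝕜] [AddCommGroup E]
    [Module 𝕜 E] (ℓ : E →ₗ[𝕜] 𝕜) (c : 𝕜 → 𝕜) (hc : ∀ t, c t ≠ 0)
    (hinj : Function.Injective fun t => c t * t) :
    Function.Injective fun z => c (ℓ z) • z := by
  intro z₁ z₂ (h : c (ℓ z₁) • z₁ = c (ℓ z₂) • z₂)
  have hℓ : ℓ z₁ = ℓ z₂ := hinj (by simpa using congrArg ℓ h)
  rw [hℓ] at h
  exact smul_right_injective E (hc _) h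

theorem strictMono_exp_max_zero_mul : StrictMono fun t : ℝ => exp (max t 0) * t := by
  refine StrictMonoOn.Iic_union_Ici (a := 0) ?_ ?_
  · intro s hs t ht hst
    simp_all
  · intro s hs t ht hst
    simp only [Set.mem_Ici] at hs ht
    simp only [max_eq_left hs, max_eq_left ht]
    exact mul_lt_mul' (exp_le_exp.2 hst.le) hst hs (exp_pos t)

/-- Lemma 2: the attention mechanism preserves injectivity. For any vector
`w` in a real inner product space `E`, the map
`z ↦ exp(ReLU(⟪w, z⟫)) • z` is injective. -/
theorem stmt4 {E : Type*} [NormedAddCommGroup E] [InnerProductSpace ℝ E]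
    (w : E) :
    Function.Injective (fun z : E => Real.exp (max ⟪w, z⟫ 0) • z) :=
  (innerₛₗ ℝ w).injective_smul_of_injective_mul (fun t => exp (max t 0))
    (fun _ => exp_ne_zero _) strictMono_exp_max_zero_mul.injective
end

section
/- Let b and p be real numbers with b ≥ 1 and p > 0. If p · b^p = b, then p = 1. Equivalently, for b ≥ 1 the equation b − p·b^p = 0 has p = 1 as its only positive real solution. -/
open Set

theorem Real.strictMonoOn_mul_rpow {b : ℝ} (hb : 1 ≤ b) :
    StrictMonoOn (fun p : ℝ => p * b ^ p) (Ici 0) := by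
  intro x _ y hy hxy
  calc x * b ^ x < y * b ^ x := mul_lt_mul_of_pos_right hxy (Real.rpow_pos_of_pos (by linarith) x)
    _ ≤ y * b ^ y := mul_le_mul_of_nonneg_left (Real.rpow_le_rpow_of_exponent_le hb hxy.le) hy

/-- Key scalar identity in the proof of Lemma 2: for `b ≥ 1` and `p > 0`,
the equation `p * b ^ p = b` forces `p = 1`. -/
theorem stmt5 (b p : ℝ) (hb : 1 ≤ b) (hp : 0 < p)
    (h : p * b ^ p = b) : p = 1 :=
  (Real.strictMonoOn_mul_rpow hb).injOn (mem_Ici.2 hp.le) (mem_Ici.2 zero_le_one) <| by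
    simpa only [Real.rpow_one, one_mul] using h
end

section
/- Let G₁ and G₂ be simple graphs on vertex sets of sizes n₁ ≥ 1 and n₂ ≥ 1 that are d₁-regular and d₂-regular respectively, with d₁ ≠ 0 and d₂ ≠ 0. Fix a feature vector x ∈ ℝ^k, a natural number r, and an arbitrary function g : ℝ^k → ℝ^{k′}. For i = 1, 2, let B_i = ((d_i⁻¹ · A_i)^r) · X_i, where A_i is the real adjacency matrix of G_i and X_i is the n_i × k matrix each of whose rows is x. Then the entrywise max branch-level readouts coincide: for every coordinate j, max over vertices v of G₁ of (g(row_v(B₁)))_j equals (g(x))_j, which equals max over vertices u of G₂ of (g(row_u(B₂)))_j. In particular, the max readout cannot distinguish the two graphs even when n₁ ≠ n₂ and they are structurally different. -/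
open Finset

lemma key8 {n k : ℕ} (G : SimpleGraph (Fin n)) [DecidableRel G.Adj]
    (d : ℕ) (hd : d ≠ 0) (hreg : G.IsRegularOfDegree d)
    (x : Fin k → ℝ) (r : ℕ) :
    (((d : ℝ)⁻¹ • G.adjMatrix ℝ) ^ r) * Matrix.of (fun _ : Fin n => x)
      = Matrix.of (fun _ : Fin n => x) := by
  induction r with
  | zero => simp
  | succ r ih =>
    rw [pow_succ', Matrix.mul_assoc, ih]
    ext v i
    have hdr : (d : ℝ) ≠ 0 := Nat.cast_ne_zero.mpr hd
    simp only [Matrix.smul_mul, Matrix.smul_apply, smul_eq_mul]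
    rw [Matrix.mul_apply]
    simp only [SimpleGraph.adjMatrix_apply, Matrix.of_apply, ite_mul, one_mul, zero_mul]
    rw [Finset.sum_ite, Finset.sum_const, Finset.sum_const_zero, add_zero]
    have hcard : #(Finset.filter (fun u => G.Adj v u) Finset.univ) = d := by
      have := hreg v
      rwa [SimpleGraph.degree, SimpleGraph.neighborFinset_eq_filter] at this
    rw [hcard, nsmul_eq_mul]
    field_simp

/-- Max-readout case of Lemma 3: for two regular graphs whose nodes all carry
the same feature vector `x`, the entrywise max branch-level readouts of the
(arbitrarily transformed) node embeddings produced by powers of the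
degree-normalized adjacency operator coincide in every coordinate, both being
the corresponding coordinate of `g x`. -/
theorem stmt8 {n₁ n₂ k k' : ℕ} (hn₁ : 1 ≤ n₁) (hn₂ : 1 ≤ n₂)
    (G₁ : SimpleGraph (Fin n₁)) (G₂ : SimpleGraph (Fin n₂))
    [DecidableRel G₁.Adj] [DecidableRel G₂.Adj]
    (d₁ d₂ : ℕ) (hd₁ : d₁ ≠ 0) (hd₂ : d₂ ≠ 0)
    (hreg₁ : G₁.IsRegularOfDegree d₁) (hreg₂ : G₂.IsRegularOfDegree d₂)
    (x : Fin k → ℝ) (r : ℕ) (g : (Fin k → ℝ) → (Fin k' → ℝ)) :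
    ∀ j : Fin k',
      (Finset.univ.sup' ⟨(⟨0, hn₁⟩ : Fin n₁), Finset.mem_univ _⟩
          (fun v => g (fun i => ((((d₁ : ℝ)⁻¹ • G₁.adjMatrix ℝ) ^ r) *
            Matrix.of (fun _ : Fin n₁ => x)) v i) j)
        = g x j) ∧
      (g x j =
        Finset.univ.sup' ⟨(⟨0, hn₂⟩ : Fin n₂), Finset.mem_univ _⟩
          (fun u => g (fun i => ((((d₂ : ℝ)⁻¹ • G₂.adjMatrix ℝ) ^ r) *
            Matrix.of (fun _ : Fin n₂ => x)) u i) j)) := by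
  intro j
  have h₁ := key8 G₁ d₁ hd₁ hreg₁ x r
  have h₂ := key8 G₂ d₂ hd₂ hreg₂ x r
  constructor
  · refine (Finset.sup'_congr _ rfl (fun v _ => by rw [h₁]; rfl : ∀ v ∈ Finset.univ,
      g (fun i => ((((d₁ : ℝ)⁻¹ • G₁.adjMatrix ℝ) ^ r) *
        Matrix.of (fun _ : Fin n₁ => x)) v i) j = g x j)).trans ?_
    exact Finset.sup'_const _ _
  · refine Eq.trans ?_ (Finset.sup'_congr _ rfl (fun u _ => by rw [h₂]; rfl : ∀ u ∈ Finset.univ,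
      g (fun i => ((((d₂ : ℝ)⁻¹ • G₂.adjMatrix ℝ) ^ r) *
        Matrix.of (fun _ : Fin n₂ => x)) u i) j = g x j)).symm
    exact (Finset.sup'_const _ _).symm
end
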